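/- arXiv:2212.06212 — 2 statements merged into one kernel-verified Lean document; each statement's English description precedes it below -/
import Mathlib

section
/- (Glivenko–Cantelli) For an i.i.d. sequence Y_1, Y_2, … with CDF F, the empirical CDFs F_n converge uniformly to F almost surely: sup_t |F_n(t) − F(t)| → 0 a.s. -/
/-!
For a fixed measurable set `s`, the strong law of large numbers applied to the indicators
`1_s(Y k)` gives `Fₙ(s) → ν(s)` almost surely, hence simultaneously for countably many sets.
Uniformity comes from bracketing (Blum–DeHardt): for every `ε > 0` finitely many pairs
`L ⊆ U` with `ν(U) - ν(L) ≤ ε` sandwich every half-line `(-∞, t]`, and by monotonicity of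
`Fₙ` and `ν` the error on `(-∞, t]` is at most `ε` plus the errors at the bracket ends.
The brackets are cut out by the levels `jε` of the CDF.
-/

open MeasureTheory ProbabilityTheory Finset Set Filter
open scoped Topology

section Bracketing

variable {α ι : Type*}

def IsBracketing (Q : Set α → ℝ) (C : ι → Set α) (ε : ℝ) (B : Set (Set α × Set α)) : Prop :=
  ∀ i, ∃ b ∈ B, b.1 ⊆ C i ∧ C i ⊆ b.2 ∧ Q b.2 - Q b.1 ≤ ε

section

variable {Q : Set α → ℝ} {C : ι → Set α}

lemma abs_sub_le_of_subset_of_subset {P : Set α → ℝ} (hP : Monotone P) (hQ : Monotone Q)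
    {L S U : Set α} {δ : ℝ} (hLS : L ⊆ S) (hSU : S ⊆ U)
    (hL : |P L - Q L| ≤ δ) (hU : |P U - Q U| ≤ δ) :
    |P S - Q S| ≤ Q U - Q L + δ := by
  obtain ⟨hL₁, hL₂⟩ := abs_le.1 hL
  obtain ⟨hU₁, hU₂⟩ := abs_le.1 hU
  have := hP hLS; have := hP hSU; have := hQ hLS; have := hQ hSU
  exact abs_le.2 ⟨by linarith, by linarith⟩

lemma IsBracketing.eventually_iSup_abs_sub_le {P : ℕ → Set α → ℝ} (hP : ∀ n, Monotone (P n))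
    (hQ : Monotone Q) {ε δ : ℝ} {B : Set (Set α × Set α)} (hB : IsBracketing Q C ε B)
    (hfin : B.Finite) (hε : 0 ≤ ε) (hδ : 0 < δ)
    (hconv : ∀ b ∈ B, Tendsto (P · b.1) atTop (𝓝 (Q b.1)) ∧
      Tendsto (P · b.2) atTop (𝓝 (Q b.2))) :
    ∀ᶠ n in atTop, ⨆ i, |P n (C i) - Q (C i)| ≤ ε + δ := by
  have hclose : ∀ᶠ n in atTop, ∀ b ∈ B, |P n b.1 - Q b.1| ≤ δ ∧ |P n b.2 - Q b.2| ≤ δ :=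
    hfin.eventually_all.2 fun b hb =>
      ((hconv b hb).1.eventually (Metric.closedBall_mem_nhds _ hδ)).and
        ((hconv b hb).2.eventually (Metric.closedBall_mem_nhds _ hδ))
  filter_upwards [hclose] with n hn
  refine Real.iSup_le (fun i => ?_) (by linarith)
  obtain ⟨b, hb, hLC, hCU, hgap⟩ := hB i
  obtain ⟨hL, hU⟩ := hn b hb
  linarith [abs_sub_le_of_subset_of_subset (hP n) hQ hLC hCU hL hU]

lemma tendsto_iSup_abs_sub_of_isBracketing {P : ℕ → Set α → ℝ} (hP : ∀ n, Monotone (P n))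
    (hQ : Monotone Q) {B : ℕ → Set (Set α × Set α)}
    (hB : ∀ m : ℕ, IsBracketing Q C (1 / (m + 1)) (B m)) (hfin : ∀ m, (B m).Finite)
    (hconv : ∀ m, ∀ b ∈ B m, Tendsto (P · b.1) atTop (𝓝 (Q b.1)) ∧
      Tendsto (P · b.2) atTop (𝓝 (Q b.2))) :
    Tendsto (fun n => ⨆ i, |P n (C i) - Q (C i)|) atTop (𝓝 0) := by
  refine tendsto_order.2 ⟨fun a ha => .of_forall fun n =>
    ha.trans_le (Real.iSup_nonneg fun i => abs_nonneg _), fun a ha => ?_⟩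
  obtain ⟨m, hm⟩ := exists_nat_one_div_lt (half_pos ha)
  filter_upwards [(hB m).eventually_iSup_abs_sub_le hP hQ (hfin m) (by positivity)
    (half_pos ha) (hconv m)] with n hn
  linarith

end

open scoped Classical in
noncomputable def empiricalFreq (x : ℕ → α) (n : ℕ) (s : Set α) : ℝ :=
  #{k ∈ range n | x k ∈ s} / n

lemma monotone_empiricalFreq (x : ℕ → α) (n : ℕ) : Monotone (empiricalFreq x n) := by
  intro s t hst
  unfold empiricalFreq
  gcongr

lemma ae_tendsto_empiricalFreq [MeasurableSpace α] {Ω : Type*} [MeasurableSpace Ω]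
    {μ : Measure Ω} {Y : ℕ → Ω → α} (hmeas : ∀ k, Measurable (Y k))
    (hindep : Pairwise fun i j => IndepFun (Y i) (Y j) μ) {ν : Measure α} [IsFiniteMeasure ν]
    (hdist : ∀ k, μ.map (Y k) = ν) {s : Set α} (hs : MeasurableSet s) :
    ∀ᵐ ω ∂μ, Tendsto (fun n => empiricalFreq (Y · ω) n s) atTop (𝓝 (ν.real s)) := by
  have hind : Measurable (s.indicator (1 : α → ℝ)) := measurable_one.indicator hs
  set X : ℕ → Ω → ℝ := fun k => s.indicator 1 ∘ Y k
  have hident : ∀ k, IdentDistrib (X k) (X 0) μ μ := fun k =>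
    IdentDistrib.comp ⟨(hmeas k).aemeasurable, (hmeas 0).aemeasurable, by rw [hdist, hdist]⟩ hind
  have hX₀ : X 0 = (Y 0 ⁻¹' s).indicator 1 := funext fun ω => (indicator_comp_right (Y 0)).symm
  have hpre : μ (Y 0 ⁻¹' s) = ν s := by rw [← hdist 0, Measure.map_apply (hmeas 0) hs]
  have hint : Integrable (X 0) μ := by
    rw [hX₀]
    exact (integrable_indicator_iff (hmeas 0 hs)).2
      (integrableOn_const (by rw [hpre]; exact measure_ne_top ν s))
  have hmean : μ[X 0] = ν.real s := by
    rw [hX₀, integral_indicator_one (hmeas 0 hs), measureReal_def, hpre, measureReal_def]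
  filter_upwards [strong_law_ae_real X hint (fun i j hij => (hindep hij).comp hind hind) hident]
    with ω hω
  rw [hmean] at hω
  refine hω.congr fun n => ?_
  classical
  simp only [empiricalFreq, X, Function.comp_apply, Finset.natCast_card_filter, indicator_apply,
    Pi.one_apply]

theorem ae_tendsto_iSup_abs_empiricalFreq_sub [MeasurableSpace α] {Ω : Type*}
    [MeasurableSpace Ω] {μ : Measure Ω} {Y : ℕ → Ω → α} (hmeas : ∀ k, Measurable (Y k))
    (hindep : Pairwise fun i j => IndepFun (Y i) (Y j) μ) {ν : Measure α} [IsFiniteMeasure ν]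
    (hdist : ∀ k, μ.map (Y k) = ν) (C : ι → Set α)
    (hC : ∀ ε > 0, ∃ B, IsBracketing ν.real C ε B ∧ B.Finite ∧
      ∀ b ∈ B, MeasurableSet b.1 ∧ MeasurableSet b.2) :
    ∀ᵐ ω ∂μ, Tendsto (fun n => ⨆ i, |empiricalFreq (Y · ω) n (C i) - ν.real (C i)|)
      atTop (𝓝 0) := by
  choose B hB hfin hBmeas using fun m : ℕ => hC (1 / (m + 1)) Nat.one_div_pos_of_nat
  have hconv : ∀ᵐ ω ∂μ, ∀ m, ∀ b ∈ B m,
      Tendsto (fun n => empiricalFreq (Y · ω) n b.1) atTop (𝓝 (ν.real b.1)) ∧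
      Tendsto (fun n => empiricalFreq (Y · ω) n b.2) atTop (𝓝 (ν.real b.2)) :=
    ae_all_iff.2 fun m => (ae_ball_iff (hfin m).countable).2 fun b hb =>
      (ae_tendsto_empiricalFreq hmeas hindep hdist (hBmeas m b hb).1).and
        (ae_tendsto_empiricalFreq hmeas hindep hdist (hBmeas m b hb).2)
  filter_upwards [hconv] with ω hω
  exact tendsto_iSup_abs_sub_of_isBracketing (monotone_empiricalFreq _)
    (fun s t hst => measureReal_mono hst) hB hfin hω

end Bracketing

section Cdf

variable (ν : Measure ℝ)

lemma measureReal_setOf_cdf_lt_le [IsProbabilityMeasure ν] {c : ℝ} (hc : 0 ≤ c) :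
    ν.real {s | cdf ν s < c} ≤ c := by
  refine ENNReal.toReal_le_of_le_ofReal hc ?_
  rw [(measurableSet_lt (cdf ν).mono.measurable measurable_const).measure_eq_iSup_isCompact ν]
  refine iSup₂_le fun K hKU => iSup_le fun hK => ?_
  rcases K.eq_empty_or_nonempty with rfl | hne
  · simp
  calc ν K ≤ ν (Iic (sSup K)) := measure_mono fun x hx => le_csSup hK.bddAbove hx
    _ = ENNReal.ofReal (cdf ν (sSup K)) := (ofReal_cdf ν _).symm
    _ ≤ ENNReal.ofReal c := ENNReal.ofReal_le_ofReal (hKU (hK.sSup_mem hne)).le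

lemma isLeast_setOf_le_cdf {c : ℝ} (hc : 0 < c) (hne : {r | c ≤ cdf ν r}.Nonempty) :
    IsLeast {r | c ≤ cdf ν r} (sInf {r | c ≤ cdf ν r}) := by
  obtain ⟨r₀, hr₀⟩ := eventually_atBot.1 ((tendsto_cdf_atBot ν).eventually (gt_mem_nhds hc))
  have hbdd : BddBelow {r | c ≤ cdf ν r} :=
    ⟨r₀, fun r hr => le_of_not_gt fun hlt => (hr₀ r hlt.le).not_ge hr⟩
  refine ⟨?_, fun r hr => csInf_le hbdd hr⟩
  refine ge_of_tendsto (((cdf ν).right_continuous _).mono Ioi_subset_Ici_self) ?_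
  filter_upwards [self_mem_nhdsWithin] with r hr
  obtain ⟨s, hs, hsr⟩ := exists_lt_of_csInf_lt hne hr
  exact hs.trans ((cdf ν).mono hsr.le)

lemma le_measureReal_lowerBounds_setOf_le_cdf [IsProbabilityMeasure ν] {c : ℝ} (hc : c ≤ 1) :
    c ≤ ν.real (lowerBounds {r | c ≤ cdf ν r}) := by
  rcases le_or_gt c 0 with hc₀ | hc₀
  · exact hc₀.trans measureReal_nonneg
  rcases eq_empty_or_nonempty {r | c ≤ cdf ν r} with hS | hS
  · rwa [hS, lowerBounds_empty, probReal_univ]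
  have hleast := isLeast_setOf_le_cdf ν hc₀ hS
  rw [hleast.lowerBounds_eq, ← cdf_eq_real]
  exact hleast.1

lemma exists_isBracketing_Iic [IsProbabilityMeasure ν] {ε : ℝ} (hε : 0 < ε) :
    ∃ B, IsBracketing ν.real Iic ε B ∧ B.Finite ∧
      ∀ b ∈ B, MeasurableSet b.1 ∧ MeasurableSet b.2 := by
  -- Up to the degenerate cases `∅` and `univ`, which this encoding absorbs, the `j`-th bracket
  -- runs from `(-∞, q]` to `(-∞, q')` or `(-∞, q']`, where `q` and `q'` are the `jε`- and
  -- `(j+1)ε`-quantiles.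
  set bracket : ℕ → Set ℝ × Set ℝ :=
    fun j => (lowerBounds {r | j * ε ≤ cdf ν r}, {s | cdf ν s < (j + 1) * ε})
  refine ⟨bracket '' Set.Iic ⌊1 / ε⌋₊, fun t => ?_, (finite_Iic _).image _, ?_⟩
  · set j := ⌊cdf ν t / ε⌋₊
    have hjt : j * ε ≤ cdf ν t :=
      (le_div_iff₀ hε).1 (Nat.floor_le (div_nonneg (cdf_nonneg ν t) hε.le))
    have htj : cdf ν t < (j + 1) * ε := (div_lt_iff₀ hε).1 (Nat.lt_floor_add_one _)
    refine ⟨bracket j, mem_image_of_mem _ (Nat.floor_le_floor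
        (div_le_div_of_nonneg_right (cdf_le_one ν t) hε.le)),
      fun s hs => hs hjt, fun s hs => ((cdf ν).mono hs).trans_lt htj, ?_⟩
    have hU := measureReal_setOf_cdf_lt_le ν (c := (j + 1) * ε) (by positivity)
    have hL := le_measureReal_lowerBounds_setOf_le_cdf ν (hjt.trans (cdf_le_one ν t))
    simp only [bracket]
    linarith
  · rintro _ ⟨j, -, rfl⟩
    have hlower : IsLowerSet (lowerBounds {r | j * ε ≤ cdf ν r}) :=
      fun a b hba ha r hr => hba.trans (ha hr)
    exact ⟨hlower.ordConnected.measurableSet,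
      measurableSet_lt (cdf ν).mono.measurable measurable_const⟩

end Cdf

theorem glivenko_cantelli_general
    {Ω : Type*} [MeasurableSpace Ω] (μ : Measure Ω)
    (Y : ℕ → Ω → ℝ)
    (hmeas : ∀ k, Measurable (Y k))
    (hindep : iIndepFun Y μ)
    (ν : Measure ℝ) [IsProbabilityMeasure ν]
    (hdist : ∀ k, Measure.map (Y k) μ = ν)
    (F : ℝ → ℝ) (hF : ∀ t, F t = (ν (Iic t)).toReal)
    (Fn : ℕ → Ω → ℝ → ℝ)
    (hFn : ∀ n ω t, Fn n ω t =
      (((Finset.range n).filter (fun k => Y k ω ≤ t)).card : ℝ) / n) :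
    ∀ᵐ ω ∂μ, Tendsto (fun n : ℕ => ⨆ t : ℝ, |Fn n ω t - F t|)
      atTop (nhds 0) := by
  have hFn' : ∀ n ω t, Fn n ω t = empiricalFreq (Y · ω) n (Iic t) := by
    intro n ω t
    rw [hFn, empiricalFreq]
    congr
  filter_upwards [ae_tendsto_iSup_abs_empiricalFreq_sub hmeas (fun i j hij => hindep.indepFun hij)
    hdist Iic fun ε hε => exists_isBracketing_Iic ν hε] with ω hω
  simpa only [hFn', hF, measureReal_def] using hω

/-- Glivenko–Cantelli: for an i.i.d. sequence Y 0, Y 1, … with common law ν and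
CDF F(t) = ν((−∞, t]), the empirical CDFs
Fₙ(ω, t) = (1/n)·#{k < n : Y k ω ≤ t} converge uniformly to F almost surely:
sup_t |Fₙ − F| → 0 a.s. -/
theorem glivenko_cantelli
    {Ω : Type*} [MeasurableSpace Ω] (μ : Measure Ω) [IsProbabilityMeasure μ]
    (Y : ℕ → Ω → ℝ)
    (hmeas : ∀ k, Measurable (Y k))
    (hindep : iIndepFun Y μ)
    (ν : Measure ℝ) [IsProbabilityMeasure ν]
    (hdist : ∀ k, Measure.map (Y k) μ = ν)
    (F : ℝ → ℝ) (hF : ∀ t, F t = (ν (Iic t)).toReal)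
    (Fn : ℕ → Ω → ℝ → ℝ)
    (hFn : ∀ n ω t, Fn n ω t =
      (((Finset.range n).filter (fun k => Y k ω ≤ t)).card : ℝ) / n) :
    ∀ᵐ ω ∂μ, Tendsto (fun n : ℕ => ⨆ t : ℝ, |Fn n ω t - F t|)
      atTop (nhds 0) :=
  glivenko_cantelli_general μ Y hmeas hindep ν hdist F hF Fn hFn
end

section
/- (Kolmogorov's maximal inequality) If X_1, …, X_n are independent random variables with mean 0 and finite variance, and S_k = X_1 + ⋯ + X_k, then for every λ > 0, P(max_{1 ≤ k ≤ n} |S_k| ≥ λ) ≤ Var(S_n)/λ². -/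
open MeasureTheory ProbabilityTheory Finset

/-!
The partial sums `S k = ∑ i < k, X i` form a martingale for the filtration generated by the
past, since each new summand is independent of the past and centred. Their squares then form a
submartingale, because `μ[S j ^ 2 | ℱ i] - S i ^ 2` is a conditional variance. Doob's maximal
inequality for this nonnegative submartingale at level `λ²` bounds `λ² P(max |S k| ≥ λ)` by
`E[S n ^ 2]`, which is `Var(S n)` as `S n` is centred.
-/

namespace MeasureTheory

variable {Ω ι β : Type*} {m0 : MeasurableSpace Ω} {μ : Measure Ω}

/-- Unlike `Filtration.natural`, the inequality `j < k` is strict, so that `X k` is independent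
of the `k`-th σ-algebra. -/
def Filtration.strictNatural [Preorder ι] [mβ : MeasurableSpace β] (X : ι → Ω → β)
    (hX : ∀ i, Measurable (X i)) : Filtration ι m0 where
  seq k := ⨆ j < k, MeasurableSpace.comap (X j) mβ
  mono' _ _ hkl := biSup_mono fun _ hj => lt_of_lt_of_le hj hkl
  le' _ := iSup₂_le fun j _ => (hX j).comap_le

theorem Filtration.measurable_strictNatural [Preorder ι] [MeasurableSpace β] {X : ι → Ω → β}
    {hX : ∀ i, Measurable (X i)} {i k : ι} (hik : i < k) :
    Measurable[Filtration.strictNatural X hX k] (X i) :=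
  measurable_iff_comap_le.2 (le_biSup (fun j => MeasurableSpace.comap (X j) _) hik)

theorem Martingale.submartingale_sq [Preorder ι] {ℱ : Filtration ι m0} [IsFiniteMeasure μ]
    {f : ι → Ω → ℝ} (hf : Martingale f ℱ μ) (hL2 : ∀ i, MemLp (f i) 2 μ) :
    Submartingale (fun i => f i ^ 2) ℱ μ := by
  refine ⟨fun i => (hf.stronglyAdapted i).pow 2, fun i j hij => ?_,
    fun i => (hL2 i).integrable_sq⟩
  have hcondVar_nonneg : 0 ≤ᵐ[μ] Var[f j; μ | ℱ i] :=
    condExp_nonneg (ae_of_all _ fun ω => sq_nonneg _)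
  filter_upwards [condVar_ae_eq_condExp_sq_sub_sq_condExp (ℱ.le i) (hL2 j), hf.2 i j hij,
    hcondVar_nonneg] with ω hvar hmart hnonneg
  simp only [Pi.sub_apply, Pi.pow_apply, hmart, Pi.zero_apply] at hvar hnonneg ⊢
  linarith

theorem Martingale.maximal_ineq_sq [IsFiniteMeasure μ] {ℱ : Filtration ℕ m0}
    {f : ℕ → Ω → ℝ} (hf : Martingale f ℱ μ) (hL2 : ∀ i, MemLp (f i) 2 μ) {lam : ℝ}
    (hlam : 0 < lam) (n : ℕ) :
    μ {ω | ∃ k ≤ n, lam ≤ |f k ω|} ≤ ENNReal.ofReal (μ[f n ^ 2] / lam ^ 2) := by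
  set ε : NNReal := (lam ^ 2).toNNReal
  have hset : {ω | ∃ k ≤ n, lam ≤ |f k ω|}
      = {ω | (ε : ℝ) ≤ (range (n + 1)).sup' nonempty_range_add_one fun k => (f k ^ 2) ω} := by
    ext ω
    simp [le_sup'_iff, ε, Real.coe_toNNReal _ (sq_nonneg lam), sq_le_sq, abs_of_pos hlam]
  have hdoob := maximal_ineq (hf.submartingale_sq hL2) (fun k ω => sq_nonneg (f k ω)) (ε := ε) n
  rw [ENNReal.ofReal_div_of_pos (by positivity), ENNReal.le_div_iff_mul_le
    (Or.inl (ENNReal.ofReal_pos.2 (by positivity)).ne') (Or.inl ENNReal.ofReal_ne_top),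
    mul_comm, hset]
  exact hdoob.trans (ENNReal.ofReal_le_ofReal
    (setIntegral_le_integral (hL2 n).integrable_sq (ae_of_all _ fun ω => sq_nonneg (f n ω))))

end MeasureTheory

namespace ProbabilityTheory

variable {Ω ι β : Type*} {m0 : MeasurableSpace Ω} {μ : Measure Ω}

theorem iIndepFun.indep_strictNatural [Preorder ι] [MeasurableSpace β] {X : ι → Ω → β}
    (hX : ∀ i, Measurable (X i)) (hindep : iIndepFun X μ) (k : ι) :
    Indep (MeasurableSpace.comap (X k) ‹_›) (Filtration.strictNatural X hX k) μ := by
  have h := indep_iSup_of_disjoint (fun i => (hX i).comap_le) hindep.iIndep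
    (Set.disjoint_singleton_left.2 (lt_irrefl k) : Disjoint {k} (Set.Iio k))
  rw [_root_.iSup_singleton] at h
  exact h

theorem iIndepFun.martingale_partialSum [IsFiniteMeasure μ] {X : ℕ → Ω → ℝ}
    (hX : ∀ i, Measurable (X i)) (hindep : iIndepFun X μ) (hint : ∀ i, Integrable (X i) μ)
    (hmean : ∀ i, μ[X i] = 0) :
    Martingale (fun k ω => ∑ i ∈ range k, X i ω) (Filtration.strictNatural X hX) μ := by
  refine martingale_of_condExp_sub_eq_zero_nat (fun k => ?_)
    (fun k => integrable_finsetSum _ fun i _ => hint i) (fun k => ?_)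
  · exact (Finset.measurable_sum _ fun i hi =>
      Filtration.measurable_strictNatural (mem_range.1 hi)).stronglyMeasurable
  · have hincrement : (fun ω => ∑ i ∈ range (k + 1), X i ω) - (fun ω => ∑ i ∈ range k, X i ω)
        = X k := by
      ext ω
      simp [sum_range_succ]
    rw [hincrement]
    simpa only [hmean k, Pi.zero_def] using condExp_indep_eq (hX k).comap_le (Filtration.le _ k)
      (comap_measurable (X k)).stronglyMeasurable (hindep.indep_strictNatural hX k)

end ProbabilityTheory

/-- Kolmogorov's maximal inequality: if X 0, …, X (n−1) are independent,
square-integrable, mean-zero random variables and S k = X 0 + ⋯ + X (k−1), then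
for every λ > 0, P(max_{1 ≤ k ≤ n} |S k| ≥ λ) ≤ Var(S n)/λ². -/
theorem kolmogorov_maximal_inequality
    {Ω : Type*} [MeasurableSpace Ω] (μ : Measure Ω) [IsProbabilityMeasure μ]
    (n : ℕ) (X : ℕ → Ω → ℝ)
    (hmeas : ∀ i, Measurable (X i))
    (hindep : iIndepFun X μ)
    (hL2 : ∀ i, MemLp (X i) 2 μ)
    (hmean : ∀ i, ∫ ω, X i ω ∂μ = 0)
    (lam : ℝ) (hlam : 0 < lam) :
    μ {ω | ∃ k, 1 ≤ k ∧ k ≤ n ∧ lam ≤ |∑ i ∈ Finset.range k, X i ω|}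
      ≤ ENNReal.ofReal
          (variance (fun ω => ∑ i ∈ Finset.range n, X i ω) μ / lam ^ 2) := by
  have hint : ∀ i, Integrable (X i) μ := fun i => (hL2 i).integrable one_le_two
  have hmart := hindep.martingale_partialSum hmeas hint hmean
  have hsum_mean : μ[fun ω => ∑ i ∈ range n, X i ω] = 0 := by
    simp [integral_finsetSum _ fun i _ => hint i, hmean]
  rw [variance_of_integral_eq_zero (Finset.measurable_sum _ fun i _ => hmeas i).aemeasurable
    hsum_mean]
  calc μ {ω | ∃ k, 1 ≤ k ∧ k ≤ n ∧ lam ≤ |∑ i ∈ range k, X i ω|}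
      ≤ μ {ω | ∃ k ≤ n, lam ≤ |∑ i ∈ range k, X i ω|} :=
        measure_mono fun ω ⟨k, _, hkn, hk⟩ => ⟨k, hkn, hk⟩
    _ ≤ _ := hmart.maximal_ineq_sq (fun k => memLp_finsetSum _ fun i _ => hL2 i) hlam n
end
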